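/- arXiv:1809.04940 — 6 statements merged into one kernel-verified Lean document; each statement's English description precedes it below -/
import Mathlib

section
/- Let (a_n)_{n∈ℕ} be a sequence of nonzero complex numbers such that |a_{n+1}/a_n| → ∞ as n → ∞. Then for every k ≥ 1, every tuple (d_1,…,d_k) of nonzero integers, and every r ∈ ℂ, the set {(n_1,…,n_k) ∈ ℕ^k : n_i ≠ n_j for all distinct i,j ∈ {1,…,k} and d_1·a_{n_1} + ⋯ + d_k·a_{n_k} = r} is finite. -/
open Filter

/-!
Beyond some index every term of the sequence exceeds, by any prescribed factor, all the terms
before it. So if the largest index of a solution is far out, the term carrying it outweighs the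
rest of the sum by a factor of two, and its size is then bounded by `2‖r‖`; as `‖aₙ‖ → ∞`, this
bounds every index of every solution.
-/

section RatioToInfinity

variable {u : ℕ → ℝ}

theorem eventually_pos_and_mul_le_succ (hu : ∀ n, 0 ≤ u n)
    (h : Tendsto (fun n => u (n + 1) / u n) atTop atTop) (c : ℝ) :
    ∀ᶠ n in atTop, 0 < u n ∧ c * u n ≤ u (n + 1) := by
  filter_upwards [h.eventually_gt_atTop 0, h.eventually_ge_atTop c] with n hpos hc
  have hun : 0 < u n := (hu n).lt_of_ne fun h0 => by simp [← h0] at hpos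
  exact ⟨hun, (le_div_iff₀ hun).1 hc⟩

theorem tendsto_atTop_of_tendsto_div_succ (hu : ∀ n, 0 ≤ u n)
    (h : Tendsto (fun n => u (n + 1) / u n) atTop atTop) : Tendsto u atTop atTop := by
  obtain ⟨N, hN⟩ := eventually_atTop.1 (eventually_pos_and_mul_le_succ hu h 2)
  refine (tendsto_add_atTop_iff_nat N).1 (tendsto_atTop_of_geom_le (c := 2) ?_ one_lt_two ?_)
  · simpa using (hN N le_rfl).1
  · intro n
    simpa only [Nat.add_right_comm n 1 N] using (hN (n + N) (Nat.le_add_left N n)).2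

theorem eventually_forall_lt_le_mul (hu : ∀ n, 0 ≤ u n)
    (h : Tendsto (fun n => u (n + 1) / u n) atTop atTop) {ε : ℝ} (hε : 0 < ε) :
    ∀ᶠ m in atTop, ∀ n < m, u n ≤ ε * u m := by
  obtain ⟨N, hN⟩ := eventually_atTop.1
    ((eventually_pos_and_mul_le_succ hu h ε⁻¹).and (eventually_pos_and_mul_le_succ hu h 1))
  have hmono {n m : ℕ} (hn : N ≤ n) (hnm : n < m) : u (n + 1) ≤ u m := by
    induction m, hnm using Nat.le_induction with
    | base => rfl
    | succ m hm ih => linarith [(hN m (by omega)).2.2]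
  have hεu : Tendsto (fun m => ε * u m) atTop atTop :=
    (tendsto_atTop_of_tendsto_div_succ hu h).const_mul_atTop hε
  filter_upwards [(Finset.range N).eventually_all.2 fun n _ => hεu.eventually_ge_atTop (u n)]
    with m hhead n hnm
  rcases lt_or_ge n N with hn | hn
  · exact hhead n (Finset.mem_range.2 hn)
  · calc u n ≤ ε * u (n + 1) := (inv_mul_le_iff₀ hε).1 (hN n hn).1.2
      _ ≤ ε * u m := mul_le_mul_of_nonneg_left (hmono hn hnm) hε.le

end RatioToInfinity

theorem mul_norm_le_norm_sum_zsmul {ι E : Type*} [Fintype ι] [DecidableEq ι]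
    [SeminormedAddCommGroup E] [NormedSpace ℝ E] (d : ι → ℤ) (x : ι → E) {j : ι} (hdj : d j ≠ 0)
    {ε : ℝ} (hε : 0 ≤ ε) (hsmall : ∀ i ≠ j, ‖x i‖ ≤ ε * ‖x j‖) :
    (1 - ε * ∑ i, |(d i : ℝ)|) * ‖x j‖ ≤ ‖∑ i, d i • x i‖ := by
  have hnorm (i : ι) : ‖d i • x i‖ = |(d i : ℝ)| * ‖x i‖ := by
    rw [norm_zsmul ℝ, Real.norm_eq_abs]
  have hlead : ‖x j‖ ≤ ‖d j • x j‖ := by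
    rw [hnorm]
    exact le_mul_of_one_le_left (norm_nonneg _) (by exact_mod_cast Int.one_le_abs hdj)
  have hrest : ‖∑ i ∈ Finset.univ.erase j, d i • x i‖ ≤ ε * ‖x j‖ * ∑ i, |(d i : ℝ)| :=
    calc ‖∑ i ∈ Finset.univ.erase j, d i • x i‖
        ≤ ∑ i ∈ Finset.univ.erase j, |(d i : ℝ)| * (ε * ‖x j‖) := by
          refine (norm_sum_le _ _).trans (Finset.sum_le_sum fun i hi => ?_)
          rw [hnorm]
          exact mul_le_mul_of_nonneg_left (hsmall i (Finset.ne_of_mem_erase hi)) (abs_nonneg _)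
      _ ≤ ∑ i, |(d i : ℝ)| * (ε * ‖x j‖) :=
          Finset.sum_le_sum_of_subset_of_nonneg (Finset.erase_subset _ _)
            fun i _ _ => by positivity
      _ = ε * ‖x j‖ * ∑ i, |(d i : ℝ)| := by rw [← Finset.sum_mul, mul_comm]
  rw [← Finset.add_sum_erase _ (fun i => d i • x i) (Finset.mem_univ j)]
  linarith [norm_le_add_norm_add (d j • x j) (∑ i ∈ Finset.univ.erase j, d i • x i)]

theorem divergent_lacunary_finite_solutions_general (a : ℕ → ℂ)
    (hdiv : Tendsto (fun n => ‖a (n + 1) / a n‖) atTop atTop)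
    (k : ℕ) (d : Fin k → ℤ) (hd : ∀ i, d i ≠ 0) (r : ℂ) :
    {n : Fin k → ℕ | (∀ i j : Fin k, i ≠ j → n i ≠ n j) ∧
      (∑ i, (d i : ℂ) * a (n i)) = r}.Finite := by
  have hratio : Tendsto (fun n => ‖a (n + 1)‖ / ‖a n‖) atTop atTop := by
    simpa only [norm_div] using hdiv
  set C : ℝ := ∑ i, |(d i : ℝ)|
  have hC : 0 ≤ C := by positivity
  set ε : ℝ := (2 * C + 1)⁻¹
  have hε : 0 < ε := by positivity
  have hεC : ε * C ≤ 1 / 2 := by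
    rw [inv_mul_le_iff₀ (by positivity)]; linarith
  obtain ⟨M, hM⟩ := eventually_atTop.1
    ((eventually_forall_lt_le_mul (fun n => norm_nonneg _) hratio hε).and
      ((tendsto_atTop_of_tendsto_div_succ (fun n => norm_nonneg _) hratio).eventually_gt_atTop
        (2 * ‖r‖)))
  refine (Set.finite_Iic fun _ => M).subset ?_
  rintro n ⟨hinj, hsum⟩ i
  by_contra! hi
  obtain ⟨j, -, hj⟩ := Finset.univ.exists_max_image n ⟨i, Finset.mem_univ i⟩
  obtain ⟨hdom, hlarge⟩ := hM (n j) (hi.le.trans (hj i (Finset.mem_univ i)))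
  have hlower := mul_norm_le_norm_sum_zsmul d (a ∘ n) (hd j) hε.le fun i hij =>
    hdom (n i) ((hj i (Finset.mem_univ i)).lt_of_ne (hinj i j hij))
  simp only [Function.comp_apply, zsmul_eq_mul, hsum] at hlower
  linarith [mul_le_mul_of_nonneg_right hεC (norm_nonneg (a (n j)))]

/-- divergent case of Lemma 6.2. If `(aₙ)` is a sequence of nonzero complex
numbers with `|a_{n+1}/a_n| → ∞`, then for every `k ≥ 1`, nonzero integer coefficients
`d₁,…,d_k` and `r ∈ ℂ`, the set of tuples of pairwise distinct indices `(n₁,…,n_k)` with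
`d₁ a_{n₁} + ⋯ + d_k a_{n_k} = r` is finite. -/
theorem divergent_lacunary_finite_solutions (a : ℕ → ℂ) (ha : ∀ n, a n ≠ 0)
    (hdiv : Tendsto (fun n => ‖a (n + 1) / a n‖) atTop atTop)
    (k : ℕ) (hk : 1 ≤ k) (d : Fin k → ℤ) (hd : ∀ i, d i ≠ 0) (r : ℂ) :
    {n : Fin k → ℕ | (∀ i j : Fin k, i ≠ j → n i ≠ n j) ∧
      (∑ i, (d i : ℂ) * a (n i)) = r}.Finite :=
  divergent_lacunary_finite_solutions_general a hdiv k d hd r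
end

section
/- Let A ⊆ ℂ be an infinite set of nonzero complex numbers, and let (a_n)_{n∈ℕ} and (c_n)_{n∈ℕ} be two injective sequences, each with range exactly A. Suppose each of the two ratio sequences a_{n+1}/a_n and c_{n+1}/c_n either diverges in absolute value to ∞ or converges to a complex number of modulus greater than 1. Then either both ratio sequences diverge in absolute value to ∞, or both converge and lim_{n→∞} a_{n+1}/a_n = lim_{n→∞} c_{n+1}/c_n. -/
/-!
A lacunary enumeration `b` has `r‖b n‖ < ‖b (n + 1)‖` eventually, for some `r > 1`, so its
moduli eventually increase strictly and tend to infinity. Past a suitable index every term is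
then larger in modulus than all earlier ones, so the tail of the enumeration is the
enumeration by increasing modulus of the elements of `A` beyond a threshold. Two such
enumerations of `A` therefore agree up to a shift of indices, `a (n + p) = c (n + q)`, and
their ratio sequences are shifts of one another.
-/

open Filter Set

section Records

variable {α β : Type*} [LinearOrder β]

def RecordsFrom (u : ℕ → β) (q : ℕ) : Prop :=
  ∀ i j, q ≤ j → i < j → u i < u j

theorem RecordsFrom.strictMono_add {u : ℕ → β} {q : ℕ} (hq : RecordsFrom u q) :
    StrictMono fun n => u (n + q) :=
  strictMono_nat_of_lt_succ fun n => hq _ _ (by omega) (by omega)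

theorem eventually_recordsFrom [NoMaxOrder β] {u : ℕ → β}
    (hmono : ∀ᶠ n in atTop, u n < u (n + 1)) (hu : Tendsto u atTop atTop) :
    ∀ᶠ q in atTop, RecordsFrom u q := by
  obtain ⟨N, hN⟩ := eventually_atTop.1 hmono
  have hmonoOn : StrictMonoOn u (Ici N) :=
    strictMonoOn_of_lt_add_one ordConnected_Ici fun n _ hn _ => hN n hn
  filter_upwards [eventually_ge_atTop N, (eventually_all_finset (Finset.range N)).2
    fun i _ => hu.eventually_gt_atTop (u i)] with q hqN hq i j hqj hij
  rcases lt_or_ge i N with hi | hi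
  · exact (hq i (Finset.mem_range.2 hi)).trans_le
      (hmonoOn.monotoneOn hqN (hqN.trans hqj) hqj)
  · exact hmonoOn hi (hi.trans hij.le) hij

theorem RecordsFrom.range_add_eq {v : α → β} {f : ℕ → α} {q : ℕ}
    (hq : RecordsFrom (v ∘ f) q) :
    range (fun n => f (n + q)) = {x ∈ range f | v (f q) ≤ v x} := by
  ext x
  constructor
  · rintro ⟨n, rfl⟩
    refine ⟨mem_range_self _, ?_⟩
    simpa using hq.strictMono_add.monotone (Nat.zero_le n)
  · rintro ⟨⟨i, rfl⟩, hi⟩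
    have hqi : q ≤ i := by
      by_contra! h
      exact (hq i q le_rfl h).not_ge hi
    exact ⟨i - q, congrArg f (Nat.sub_add_cancel hqi)⟩

theorem eq_of_range_eq_of_strictMono_comp {v : α → β} {f g : ℕ → α}
    (hf : StrictMono (v ∘ f)) (hg : StrictMono (v ∘ g)) (h : range f = range g) : f = g := by
  have hv : v ∘ f = v ∘ g := by rw [← hf.range_inj hg, range_comp, range_comp, h]
  funext n
  obtain ⟨m, hm⟩ : f n ∈ range g := h ▸ mem_range_self n
  have hmn : (v ∘ g) m = (v ∘ g) n := by rw [← congrFun hv n, Function.comp_apply, hm]; rfl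
  rw [← hm, hg.injective hmn]

theorem exists_add_eq_add_of_range_eq [NoMaxOrder β] {v : α → β} {f g : ℕ → α}
    (hrange : range f = range g) (hf : ∀ᶠ p in atTop, RecordsFrom (v ∘ f) p)
    (hg : ∀ᶠ q in atTop, RecordsFrom (v ∘ g) q) (hfv : Tendsto (v ∘ f) atTop atTop) :
    ∃ p q, ∀ n, f (n + p) = g (n + q) := by
  obtain ⟨Q, hQ⟩ := eventually_atTop.1 hg
  obtain ⟨p, hp, hpQ⟩ := (hf.and <| (eventually_all_finset (Finset.range Q)).2
    fun i _ => hfv.eventually_gt_atTop (v (g i))).exists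
  obtain ⟨q, hqp⟩ : f p ∈ range g := hrange ▸ mem_range_self p
  -- `f p` is larger than `v ∘ g` on `[0, Q)`, so its index `q` in `g` lies past `Q`.
  have hq : RecordsFrom (v ∘ g) q := hQ q <| by
    by_contra! h
    exact (hpQ q (Finset.mem_range.2 h)).ne (by simp [hqp])
  refine ⟨p, q, congrFun (eq_of_range_eq_of_strictMono_comp (v := v)
    hp.strictMono_add hq.strictMono_add ?_)⟩
  rw [hp.range_add_eq, hq.range_add_eq, hrange, hqp]

end Records

theorem tendsto_atTop_of_eventually_mul_lt {u : ℕ → ℝ} {r : ℝ} (hr : 1 < r)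
    (h : ∀ᶠ n in atTop, 0 < u n ∧ r * u n < u (n + 1)) : Tendsto u atTop atTop := by
  obtain ⟨N, hN⟩ := eventually_atTop.1 h
  refine (tendsto_add_atTop_iff_nat N).1 <|
    tendsto_atTop_of_geom_le (by simpa using (hN N le_rfl).1) hr fun n => ?_
  simpa [add_right_comm] using (hN (n + N) (by omega)).2.le

theorem tendsto_atTop_iff_of_add_eq {γ : Type*} {u w : ℕ → γ} {l : Filter γ} {p q : ℕ}
    (h : ∀ n, u (n + p) = w (n + q)) : Tendsto u atTop l ↔ Tendsto w atTop l := by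
  rw [← tendsto_add_atTop_iff_nat (f := u) p, ← tendsto_add_atTop_iff_nat (f := w) q, funext h]

section Lacunary

variable {𝕜 : Type*} [NormedDivisionRing 𝕜] {b : ℕ → 𝕜}

theorem exists_one_lt_eventually_lt_norm_div
    (hlac : Tendsto (fun n => ‖b (n + 1) / b n‖) atTop atTop ∨
      ∃ κ : 𝕜, 1 < ‖κ‖ ∧ Tendsto (fun n => b (n + 1) / b n) atTop (nhds κ)) :
    ∃ r : ℝ, 1 < r ∧ ∀ᶠ n in atTop, r < ‖b (n + 1) / b n‖ := by
  rcases hlac with h | ⟨κ, hκ, h⟩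
  · exact ⟨2, one_lt_two, h.eventually_gt_atTop 2⟩
  · obtain ⟨r, h1r, hrκ⟩ := exists_between hκ
    exact ⟨r, h1r, h.norm.eventually_const_lt hrκ⟩

theorem eventually_mul_norm_lt_norm_succ {r : ℝ} (hr : 0 ≤ r)
    (h : ∀ᶠ n in atTop, r < ‖b (n + 1) / b n‖) :
    ∀ᶠ n in atTop, 0 < ‖b n‖ ∧ r * ‖b n‖ < ‖b (n + 1)‖ := by
  filter_upwards [h] with n hn
  have hbn : 0 < ‖b n‖ := by
    by_contra! hb
    rw [norm_le_zero_iff.1 hb, div_zero, norm_zero] at hn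
    linarith
  rw [norm_div, lt_div_iff₀ hbn] at hn
  exact ⟨hbn, hn⟩

theorem eventually_recordsFrom_norm_of_lacunary
    (hlac : Tendsto (fun n => ‖b (n + 1) / b n‖) atTop atTop ∨
      ∃ κ : 𝕜, 1 < ‖κ‖ ∧ Tendsto (fun n => b (n + 1) / b n) atTop (nhds κ)) :
    (∀ᶠ q in atTop, RecordsFrom (norm ∘ b) q) ∧ Tendsto (norm ∘ b) atTop atTop := by
  obtain ⟨r, hr, hratio⟩ := exists_one_lt_eventually_lt_norm_div hlac
  have hgrowth := eventually_mul_norm_lt_norm_succ (zero_le_one.trans hr.le) hratio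
  have htop : Tendsto (norm ∘ b) atTop atTop := tendsto_atTop_of_eventually_mul_lt hr hgrowth
  refine ⟨eventually_recordsFrom ?_ htop, htop⟩
  filter_upwards [hgrowth] with n ⟨hbn, hn⟩
  exact (lt_mul_of_one_lt_left hbn hr).trans hn

end Lacunary

theorem kepler_limit_well_defined_general (A : Set ℂ)
    (a c : ℕ → ℂ)
    (hrange_a : Set.range a = A) (hrange_c : Set.range c = A)
    (hlac_a : Tendsto (fun n => ‖a (n + 1) / a n‖) atTop atTop ∨
      ∃ κ : ℂ, 1 < ‖κ‖ ∧ Tendsto (fun n => a (n + 1) / a n) atTop (nhds κ))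
    (hlac_c : Tendsto (fun n => ‖c (n + 1) / c n‖) atTop atTop ∨
      ∃ κ : ℂ, 1 < ‖κ‖ ∧ Tendsto (fun n => c (n + 1) / c n) atTop (nhds κ)) :
    (Tendsto (fun n => ‖a (n + 1) / a n‖) atTop atTop ∧
      Tendsto (fun n => ‖c (n + 1) / c n‖) atTop atTop) ∨
    (∃ κ : ℂ, Tendsto (fun n => a (n + 1) / a n) atTop (nhds κ) ∧
      Tendsto (fun n => c (n + 1) / c n) atTop (nhds κ)) := by
  obtain ⟨ha_rec, ha_top⟩ := eventually_recordsFrom_norm_of_lacunary hlac_a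
  obtain ⟨hc_rec, -⟩ := eventually_recordsFrom_norm_of_lacunary hlac_c
  obtain ⟨p, q, hshift⟩ :=
    exists_add_eq_add_of_range_eq (hrange_a.trans hrange_c.symm) ha_rec hc_rec ha_top
  have hratio : ∀ n, a (n + p + 1) / a (n + p) = c (n + q + 1) / c (n + q) := fun n => by
    rw [add_right_comm n p, hshift, hshift, add_right_comm n 1 q]
  rcases hlac_a with h | ⟨κ, -, h⟩
  · exact .inl ⟨h, (tendsto_atTop_iff_of_add_eq fun n => congrArg (‖·‖) (hratio n)).1 h⟩
  · exact .inr ⟨κ, h, (tendsto_atTop_iff_of_add_eq hratio).1 h⟩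

/-- well-definedness of the strongly lacunary dichotomy and the Kepler limit.
If an infinite set `A ⊆ ℂ` of nonzero complex numbers is enumerated by two injective
sequences, each of whose consecutive-ratio sequences either diverges in absolute value to
`∞` or converges to a complex number of modulus `> 1`, then either both ratio sequences
diverge, or both converge to the same limit. -/
theorem kepler_limit_well_defined (A : Set ℂ) (hA : A.Infinite) (h0 : ∀ x ∈ A, x ≠ 0)
    (a c : ℕ → ℂ) (ha : Function.Injective a) (hc : Function.Injective c)
    (hrange_a : Set.range a = A) (hrange_c : Set.range c = A)
    (hlac_a : Tendsto (fun n => ‖a (n + 1) / a n‖) atTop atTop ∨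
      ∃ κ : ℂ, 1 < ‖κ‖ ∧ Tendsto (fun n => a (n + 1) / a n) atTop (nhds κ))
    (hlac_c : Tendsto (fun n => ‖c (n + 1) / c n‖) atTop atTop ∨
      ∃ κ : ℂ, 1 < ‖κ‖ ∧ Tendsto (fun n => c (n + 1) / c n) atTop (nhds κ)) :
    (Tendsto (fun n => ‖a (n + 1) / a n‖) atTop atTop ∧
      Tendsto (fun n => ‖c (n + 1) / c n‖) atTop atTop) ∨
    (∃ κ : ℂ, Tendsto (fun n => a (n + 1) / a n) atTop (nhds κ) ∧
      Tendsto (fun n => c (n + 1) / c n) atTop (nhds κ)) :=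
  kepler_limit_well_defined_general A a c hrange_a hrange_c hlac_a hlac_c
end

section
/- Let A ⊆ ℂ be a divergent strongly lacunary set, i.e., A∖{0} admits an injective enumeration (a_n)_{n∈ℕ} with |a_{n+1}/a_n| → ∞. Then A has the ESS property in (ℂ,+) with U_2 = {0}, U_k = ∅ for all k ≠ 2, and V_k = {0} for all k ≥ 1: for every k ≥ 1 there exists n_k ∈ ℕ such that for every r ∈ ℂ (with r ≠ 0 in the case k = 2), there are at most n_k tuples (a_1,…,a_k) ∈ (±A)^k satisfying a_1 + ⋯ + a_k = r and Σ_{i∈I} a_i ≠ 0 for every nonempty proper subset I ⊊ {1,…,k}. -/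
open Finset Filter Pointwise

/-- The set of tuples `(a₁,…,a_k) ∈ (±A)^k` with `a₁ + ⋯ + a_k = r` and no proper
nonempty subsum lying in `V`. -/
def ESSsolSet {G : Type*} [AddCommGroup G] (A : Set G) (k : ℕ) (V : Set G) (r : G) :
    Set (Fin k → G) :=
  {t | (∀ i, t i ∈ A ∪ -A) ∧ (∑ i, t i) = r ∧
    ∀ I : Finset (Fin k), I.Nonempty → I ≠ Finset.univ → (∑ i ∈ I, t i) ∉ V}

/-!
Write every entry of a solution as `±a n` and let `m` be the largest index that occurs. Beyond a
threshold, `‖a m‖` exceeds `2k` times every earlier term, so the entries of smaller index sum to at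
most `‖a m‖ / 2`, while the entries `±a m` sum to a nonzero integer multiple of `a m` (a nonempty
subsum). Hence `‖a m‖ / 2 ≤ ‖r‖ ≤ k ‖a m‖`, which leaves for `m` the indices below the threshold and
at most one more, whatever `r` is; deleting that entry and inducting on `k` bounds the number of
solutions. For `r = 0` the estimate is impossible, so all indices lie below the threshold: the block
of top entries is a proper subsum unless all entries are `±a m`, and then two of them cancel.
-/

theorem norm_le_norm_sum_of_forall_eq_or_eq_neg {ι E : Type*} [SeminormedAddCommGroup E]
    [NormedSpace ℝ E] {s : Finset ι} {f : ι → E} {x : E}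
    (hf : ∀ i ∈ s, f i = x ∨ f i = -x) (hs : ∑ i ∈ s, f i ≠ 0) : ‖x‖ ≤ ‖∑ i ∈ s, f i‖ := by
  classical
  set c : ℤ := ∑ i ∈ s, if f i = x then 1 else -1
  have hc : ∑ i ∈ s, f i = c • x := by
    rw [sum_smul]
    refine sum_congr rfl fun i hi => ?_
    split_ifs with h
    · simp [h]
    · simp [(hf i hi).resolve_left h]
  have hc0 : c ≠ 0 := by
    rintro h
    simp [hc, h] at hs
  rw [hc, norm_zsmul ℝ, Real.norm_eq_abs, ← Int.cast_abs]
  exact le_mul_of_one_le_left (norm_nonneg x) (by exact_mod_cast Int.one_le_abs hc0)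

theorem exists_ne_add_eq_zero_of_sum_eq_zero {ι E : Type*} [Fintype ι] [Nonempty ι]
    [AddCommGroup E] [IsAddTorsionFree E] {t : ι → E} {x : E} (hx : x ≠ 0)
    (ht : ∀ i, t i = x ∨ t i = -x) (hsum : ∑ i, t i = 0) :
    ∃ i j, i ≠ j ∧ t i + t j = 0 := by
  obtain ⟨i₀⟩ := ‹Nonempty ι›
  by_contra! h
  have hconst : ∀ j, t j = t i₀ := by
    intro j
    by_contra hj
    have hne : j ≠ i₀ := by rintro rfl; exact hj rfl
    have := h j i₀ hne
    rcases ht j with h1 | h1 <;> rcases ht i₀ with h2 | h2 <;> simp_all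
  have hi₀ : t i₀ ≠ 0 := by rcases ht i₀ with h | h <;> simp [h, hx]
  rw [sum_congr rfl fun j _ => hconst j, sum_const, nsmul_eq_zero_iff_right
    univ_nonempty.card_pos.ne'] at hsum
  exact hi₀ hsum

def EventuallyDominatesPredecessors {E : Type*} [Norm E] (a : ℕ → E) : Prop :=
  ∀ K : ℝ, ∀ᶠ m in atTop, ∀ n < m, K * ‖a n‖ < ‖a m‖

theorem eventuallyDominatesPredecessors_of_tendsto_norm_div {E : Type*} [NormedAddCommGroup E]
    {a : ℕ → E} (ha0 : ∀ n, a n ≠ 0) (ha : Tendsto (fun n => ‖a (n + 1)‖ / ‖a n‖) atTop atTop) :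
    EventuallyDominatesPredecessors a := by
  intro K
  have hpos : ∀ n, 0 < ‖a n‖ := fun n => norm_pos_iff.2 (ha0 n)
  set L := max K 1 + 1
  have hL : 1 < L := by have := le_max_right K 1; linarith
  obtain ⟨N₀, hN₀⟩ := eventually_atTop.1 (ha.eventually_ge_atTop L)
  have hstep : ∀ n ≥ N₀, L * ‖a n‖ ≤ ‖a (n + 1)‖ := fun n hn =>
    (le_div_iff₀ (hpos n)).1 (hN₀ n hn)
  have hmono : MonotoneOn (‖a ·‖) (Set.Ici N₀) := monotoneOn_nat_Ici_of_le_succ fun n hn =>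
    (le_mul_of_one_le_left (hpos n).le hL.le).trans (hstep n hn)
  have htend : Tendsto (‖a ·‖) atTop atTop :=
    (tendsto_add_atTop_iff_nat N₀).1 <| tendsto_atTop_of_geom_le (hpos _) hL fun j => by
      simpa only [add_right_comm j 1 N₀] using hstep (j + N₀) (Nat.le_add_left N₀ j)
  have hearly : ∀ᶠ m in atTop, ∀ n ∈ Set.Iio N₀, K * ‖a n‖ < ‖a m‖ :=
    (eventually_all_finite (Set.finite_Iio N₀)).2 fun n _ => htend.eventually_gt_atTop _
  filter_upwards [hearly, eventually_gt_atTop N₀] with m hm hmN n hn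
  obtain hn' | hn' := lt_or_ge n N₀
  · exact hm n hn'
  obtain ⟨m, rfl⟩ : ∃ m', m = m' + 1 := ⟨m - 1, by omega⟩
  calc K * ‖a n‖ ≤ max K 1 * ‖a m‖ := by
        gcongr
        · exact le_max_left K 1
        · exact hmono hn' (Set.mem_Ici.2 (by omega)) (by omega)
    _ < L * ‖a m‖ := by gcongr; exacts [hpos m, lt_add_one _]
    _ ≤ ‖a (m + 1)‖ := hstep m (by omega)

def signedImage {β : Type*} [Neg β] [DecidableEq β] (a : ℕ → β) (P : Finset ℕ) :
    Finset β :=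
  P.image a ∪ P.image (fun n => -a n)

theorem card_signedImage_le {β : Type*} [Neg β] [DecidableEq β] (a : ℕ → β)
    (P : Finset ℕ) :
    #(signedImage a P) ≤ 2 * #P :=
  (card_union_le _ _).trans <| by
    have h₁ := P.card_image_le (f := a)
    have h₂ := P.card_image_le (f := fun n => -a n)
    omega

theorem mem_signedImage {β : Type*} [Neg β] [DecidableEq β] {a : ℕ → β} {P : Finset ℕ}
    {x : β} {n : ℕ} (hn : n ∈ P) (hx : x = a n ∨ x = -a n) : x ∈ signedImage a P := by
  rcases hx with rfl | rfl
  · exact mem_union_left _ (mem_image_of_mem a hn)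
  · exact mem_union_right _ (mem_image_of_mem (fun n => -a n) hn)

section TopIndex

variable {ι E : Type*} [Fintype ι] [SeminormedAddCommGroup E] {a : ℕ → E} {t : ι → E}
  {idx : ι → ℕ} {m : ℕ}

theorem two_mul_norm_sum_filter_ne_le (hnorm : ∀ i, ‖t i‖ = ‖a (idx i)‖)
    (hle : ∀ i, idx i ≤ m) (hm : ∀ n < m, 2 * Fintype.card ι * ‖a n‖ < ‖a m‖) :
    2 * ‖∑ i with idx i ≠ m, t i‖ ≤ ‖a m‖ := by
  rcases isEmpty_or_nonempty ι with hι | hι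
  · simp
  have hcard : (0 : ℝ) < Fintype.card ι := by exact_mod_cast Fintype.card_pos
  refine le_of_mul_le_mul_left ?_ hcard
  calc (Fintype.card ι : ℝ) * (2 * ‖∑ i with idx i ≠ m, t i‖)
      ≤ ∑ i with idx i ≠ m, 2 * Fintype.card ι * ‖t i‖ := by
        rw [← mul_sum, mul_left_comm, ← mul_assoc]
        gcongr
        exact norm_sum_le _ _
    _ ≤ ∑ i with idx i ≠ m, ‖a m‖ := by
        refine sum_le_sum fun i hi => ?_
        rw [hnorm]
        exact (hm _ ((hle i).lt_of_ne (mem_filter.1 hi).2)).le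
    _ ≤ Fintype.card ι * ‖a m‖ := by
        rw [sum_const, nsmul_eq_mul]
        gcongr
        exact_mod_cast card_le_univ _

theorem norm_sum_le_card_mul (hnorm : ∀ i, ‖t i‖ = ‖a (idx i)‖) (hle : ∀ i, idx i ≤ m)
    (hm : ∀ n < m, 2 * Fintype.card ι * ‖a n‖ < ‖a m‖) :
    ‖∑ i, t i‖ ≤ Fintype.card ι * ‖a m‖ := by
  have hterm : ∀ i, ‖t i‖ ≤ ‖a m‖ := by
    intro i
    rw [hnorm]
    obtain hi | hi := (hle i).lt_or_eq
    · have hcard : (1 : ℝ) ≤ Fintype.card ι := by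
        exact_mod_cast Fintype.card_pos_iff.2 ⟨i⟩
      have := hm _ hi
      nlinarith [norm_nonneg (a (idx i))]
    · rw [hi]
  calc ‖∑ i, t i‖ ≤ ∑ i, ‖t i‖ := norm_sum_le _ _
    _ ≤ ∑ _i : ι, ‖a m‖ := sum_le_sum fun i _ => hterm i
    _ = Fintype.card ι * ‖a m‖ := by rw [sum_const, card_univ, nsmul_eq_mul]

theorem norm_le_two_mul_norm_sum [NormedSpace ℝ E]
    (hidx : ∀ i, t i = a (idx i) ∨ t i = -a (idx i)) (hle : ∀ i, idx i ≤ m)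
    (hm : ∀ n < m, 2 * Fintype.card ι * ‖a n‖ < ‖a m‖)
    (hblock : ∑ i with idx i = m, t i ≠ 0) :
    ‖a m‖ ≤ 2 * ‖∑ i, t i‖ := by
  have hnorm : ∀ i, ‖t i‖ = ‖a (idx i)‖ := fun i => by rcases hidx i with h | h <;> simp [h]
  have hlow : ‖a m‖ ≤ ‖∑ i with idx i = m, t i‖ :=
    norm_le_norm_sum_of_forall_eq_or_eq_neg (fun i hi => (mem_filter.1 hi).2 ▸ hidx i) hblock
  have htail := two_mul_norm_sum_filter_ne_le hnorm hle hm
  have hsplit := sum_filter_add_sum_filter_not univ (fun i => idx i = m) t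
  have := norm_sub_le (∑ i, t i) (∑ i with idx i ≠ m, t i)
  rw [← hsplit, add_sub_cancel_right] at this
  rw [← hsplit]
  linarith

end TopIndex

-- Unlike in `ESSsolSet`, the full sum must be nonzero too; this makes the family stable under
-- deleting an entry.
def nonvanishingSubsumTuples {E : Type*} [AddCommGroup E] (a : ℕ → E) (k : ℕ) (r : E) :
    Set (Fin k → E) :=
  {t | (∀ i, ∃ n, t i = a n ∨ t i = -a n) ∧ ∑ i, t i = r ∧
    ∀ I : Finset (Fin k), I.Nonempty → ∑ i ∈ I, t i ≠ 0}

section Counting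

variable {E : Type*} [SeminormedAddCommGroup E] {a : ℕ → E}

theorem removeNth_mem_nonvanishingSubsumTuples {k : ℕ} {r : E} {t : Fin (k + 1) → E}
    (ht : t ∈ nonvanishingSubsumTuples a (k + 1) r) (i : Fin (k + 1)) :
    i.removeNth t ∈ nonvanishingSubsumTuples a k (r - t i) := by
  obtain ⟨hentries, hsum, hsub⟩ := ht
  refine ⟨fun j => hentries _, ?_, fun J hJ => ?_⟩
  · rw [← hsum, Fin.sum_univ_succAbove t i]
    simp [Fin.removeNth]
  · simpa only [Fin.removeNth, sum_map, Fin.coe_succAboveEmb] using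
      hsub (J.map i.succAboveEmb) (hJ.map)

theorem exists_eq_of_norm_le_two_mul_norm_le_mul {c : ℝ} {N : ℕ}
    (hN : ∀ m ≥ N, ∀ n < m, 2 * c * ‖a n‖ < ‖a m‖) (r : E) :
    ∃ m₀, ∀ m ≥ N, ‖a m‖ ≤ 2 * ‖r‖ → ‖r‖ ≤ c * ‖a m‖ → m = m₀ := by
  have hlt : ∀ m m', N ≤ m' → m < m' → ‖a m'‖ ≤ 2 * ‖r‖ → ‖r‖ ≤ c * ‖a m‖ →
      False :=
    fun m m' hm' hlt h₁ h₂ => by linarith [hN m' hm' m hlt]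
  by_cases h : ∃ m ≥ N, ‖a m‖ ≤ 2 * ‖r‖ ∧ ‖r‖ ≤ c * ‖a m‖
  · obtain ⟨m₀, hm₀N, hm₀₁, hm₀₂⟩ := h
    refine ⟨m₀, fun m hm h₁ h₂ => ?_⟩
    rcases lt_trichotomy m m₀ with hlt' | rfl | hlt'
    · exact (hlt m m₀ hm₀N hlt' hm₀₁ h₂).elim
    · rfl
    · exact (hlt m₀ m hm hlt' h₁ hm₀₂).elim
  · push Not at h
    exact ⟨0, fun m hm h₁ h₂ => ((h m hm h₁).not_ge h₂).elim⟩

variable [NormedSpace ℝ E]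

theorem exists_mem_signedImage_of_mem_nonvanishingSubsumTuples [DecidableEq E]
    {k N m₀ : ℕ} {r : E} (hN : ∀ m ≥ N, ∀ n < m, 2 * (k + 1 : ℕ) * ‖a n‖ < ‖a m‖)
    (hm₀ : ∀ m ≥ N, ‖a m‖ ≤ 2 * ‖r‖ → ‖r‖ ≤ (k + 1 : ℕ) * ‖a m‖ → m = m₀)
    {t : Fin (k + 1) → E} (ht : t ∈ nonvanishingSubsumTuples a (k + 1) r) :
    ∃ i, t i ∈ signedImage a (insert m₀ (range N)) := by
  obtain ⟨hentries, hsum, hsub⟩ := ht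
  choose idx hidx using hentries
  obtain ⟨i₀, -, hi₀⟩ := exists_max_image univ idx univ_nonempty
  have hle : ∀ i, idx i ≤ idx i₀ := fun i => hi₀ i (mem_univ i)
  refine ⟨i₀, mem_signedImage ?_ (hidx i₀)⟩
  rw [mem_insert, mem_range]
  by_contra! h
  have hm : ∀ n < idx i₀, 2 * Fintype.card (Fin (k + 1)) * ‖a n‖ < ‖a (idx i₀)‖ := by
    simpa only [Fintype.card_fin] using hN _ h.2
  refine h.1 (hm₀ _ h.2 ?_ ?_) <;> rw [← hsum]
  · exact norm_le_two_mul_norm_sum hidx hle hm (hsub _ ⟨i₀, by simp⟩)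
  · simpa only [Fintype.card_fin] using norm_sum_le_card_mul (fun i => by
      rcases hidx i with h | h <;> simp [h]) hle hm

theorem exists_encard_nonvanishingSubsumTuples_le (ha : EventuallyDominatesPredecessors a) (k : ℕ) :
    ∃ n : ℕ, ∀ r, (nonvanishingSubsumTuples a k r).encard ≤ n := by
  classical
  induction k with
  | zero => exact ⟨1, fun r => Set.encard_le_one_iff.2 fun _ _ _ _ => Subsingleton.elim _ _⟩
  | succ k ih =>
    obtain ⟨n, hn⟩ := ih
    obtain ⟨N, hN⟩ := eventually_atTop.1 (ha (2 * (k + 1 : ℕ)))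
    refine ⟨(k + 1) * (2 * (N + 1)) * n, fun r => ?_⟩
    obtain ⟨m₀, hm₀⟩ := exists_eq_of_norm_le_two_mul_norm_le_mul hN r
    set T := nonvanishingSubsumTuples a k
    set V := signedImage a (insert m₀ (range N))
    have hV : #V ≤ 2 * (N + 1) :=
      (card_signedImage_le _ _).trans (by grw [card_insert_le, card_range])
    have hcover : nonvanishingSubsumTuples a (k + 1) r ⊆
        ⋃ i, ⋃ v ∈ V, Fin.insertNth (α := fun _ => E) i v '' T (r - v) := by
      intro t ht
      obtain ⟨i, hi⟩ := exists_mem_signedImage_of_mem_nonvanishingSubsumTuples hN hm₀ ht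
      simp only [Set.mem_iUnion]
      exact ⟨i, t i, hi, _, removeNth_mem_nonvanishingSubsumTuples ht i,
        Fin.insertNth_self_removeNth i t⟩
    calc _ ≤ _ := Set.encard_le_encard hcover
      _ ≤ ∑ i, (⋃ v ∈ V, Fin.insertNth (α := fun _ => E) i v '' T (r - v)).encard :=
        Set.encard_iUnion_le_of_fintype _
      _ ≤ ∑ i, ∑ v ∈ V, (Fin.insertNth (α := fun _ => E) i v '' T (r - v)).encard := by
        gcongr with i
        exact set_encard_biUnion_le _ _
      _ ≤ ∑ _i : Fin (k + 1), ∑ _v ∈ V, (n : ℕ∞) := by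
        gcongr with i _ v
        exact (Set.encard_image_le _ _).trans (hn _)
      _ ≤ _ := by
        simp only [sum_const, card_univ, Fintype.card_fin, nsmul_eq_mul]
        norm_cast
        rw [mul_assoc]
        gcongr

end Counting

theorem sum_filter_eq_ne_zero_of_three_le_card {ι G : Type*} [Fintype ι] [AddCommGroup G]
    [IsAddTorsionFree G] {a : ℕ → G} {t : ι → G} {idx : ι → ℕ} {m : ℕ} (ham : a m ≠ 0)
    (hidx : ∀ i, t i = a (idx i) ∨ t i = -a (idx i)) (hcard : 3 ≤ Fintype.card ι)
    (hsub : ∀ I : Finset ι, I.Nonempty → I ≠ univ → ∑ i ∈ I, t i ≠ 0) {i₀ : ι}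
    (hi₀ : idx i₀ = m) : ∑ i with idx i = m, t i ≠ 0 := by
  classical
  by_cases hblock : univ.filter (fun i => idx i = m) = univ
  · have hall : ∀ i, t i = a m ∨ t i = -a m := fun i =>
      (mem_filter.1 (hblock ▸ mem_univ i)).2 ▸ hidx i
    rw [hblock]
    intro hsum
    have : Nonempty ι := ⟨i₀⟩
    obtain ⟨i, j, hij, hpair⟩ := exists_ne_add_eq_zero_of_sum_eq_zero ham hall hsum
    refine hsub {i, j} (insert_nonempty _ _) (fun h => ?_) (by rw [sum_pair hij, hpair])
    have := congrArg card h
    rw [card_pair hij, card_univ] at this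
    omega
  · exact hsub _ ⟨i₀, mem_filter.2 ⟨mem_univ _, hi₀⟩⟩ hblock

section ESS

variable {G : Type*} [AddCommGroup G] {A : Set G} {k : ℕ} {r : G}

theorem encard_ESSsolSet_one_le (V : Set G) : (ESSsolSet A 1 V r).encard ≤ 1 := by
  refine Set.encard_le_one_iff.2 fun s t ⟨_, hs, _⟩ ⟨_, ht, _⟩ => funext fun i => ?_
  rw [Fin.sum_univ_one] at hs ht
  rw [Subsingleton.elim i 0, hs, ht]

theorem exists_eq_or_eq_neg_of_mem_ESSsolSet {a : ℕ → G} (hA : Set.range a = A \ {0})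
    (hk : 2 ≤ k) {t : Fin k → G} (ht : t ∈ ESSsolSet A k {0} r) (i : Fin k) :
    ∃ n, t i = a n ∨ t i = -a n := by
  obtain ⟨hmem, -, hsub⟩ := ht
  have hproper : {i} ≠ (univ : Finset (Fin k)) := fun h => by
    have := congrArg card h
    rw [card_singleton, card_univ, Fintype.card_fin] at this
    omega
  have hne : t i ≠ 0 := by simpa using hsub {i} (singleton_nonempty i) hproper
  rcases hmem i with h | h
  · obtain ⟨n, hn⟩ : t i ∈ Set.range a := hA ▸ ⟨h, hne⟩
    exact ⟨n, .inl hn.symm⟩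
  · obtain ⟨n, hn⟩ : -t i ∈ Set.range a := hA ▸ ⟨h, neg_ne_zero.2 hne⟩
    exact ⟨n, .inr (by rw [hn, neg_neg])⟩

theorem ESSsolSet_subset_nonvanishingSubsumTuples {a : ℕ → G} (hA : Set.range a = A \ {0})
    (hk : 2 ≤ k) (hr : r ≠ 0) : ESSsolSet A k {0} r ⊆ nonvanishingSubsumTuples a k r := by
  intro t ht
  refine ⟨exists_eq_or_eq_neg_of_mem_ESSsolSet hA hk ht, ht.2.1, fun I hI => ?_⟩
  by_cases hIu : I = univ
  · rwa [hIu, ht.2.1]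
  · simpa using ht.2.2 I hI hIu

end ESS

theorem ESSsolSet_zero_finite {E : Type*} [NormedAddCommGroup E] [NormedSpace ℝ E]
    [IsAddTorsionFree E] {A : Set E} {a : ℕ → E} (hA : Set.range a = A \ {0})
    (ha : EventuallyDominatesPredecessors a) {k : ℕ} (hk : 3 ≤ k) :
    (ESSsolSet A k {0} 0).Finite := by
  classical
  obtain ⟨N, hN⟩ := eventually_atTop.1 (ha (2 * k))
  refine (Set.Finite.pi (t := fun _ => ↑(signedImage a (range N))) fun _ => finite_toSet _).subset
    fun t ht => ?_
  choose idx hidx using exists_eq_or_eq_neg_of_mem_ESSsolSet hA (by omega) ht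
  refine Set.mem_univ_pi.2 fun i => mem_signedImage (mem_range.2 ?_) (hidx i)
  obtain ⟨i₀, -, hi₀⟩ := exists_max_image univ idx ⟨i, mem_univ i⟩
  have hle : ∀ j, idx j ≤ idx i₀ := fun j => hi₀ j (mem_univ j)
  refine (hle i).trans_lt (not_le.1 fun hNm => ?_)
  have ham : a (idx i₀) ≠ 0 := fun h => (hA.subset ⟨_, h⟩).2 rfl
  have hblock := sum_filter_eq_ne_zero_of_three_le_card ham hidx (by simpa using hk)
    (fun I hI hIu => by simpa using ht.2.2 I hI hIu) rfl
  have := norm_le_two_mul_norm_sum hidx hle (by simpa using hN _ hNm) hblock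
  rw [ht.2.1, norm_zero, mul_zero] at this
  exact ham (norm_le_zero_iff.1 this)

/-- Example (2) after Theorem 6.9. A divergent strongly lacunary set
`A ⊆ ℂ` has the ESS property in `(ℂ,+)` with `U₂ = {0}`, `U_k = ∅` for `k ≠ 2`, and
`V_k = {0}` for all `k`. -/
theorem divergent_lacunary_ESS_property (A : Set ℂ)
    (hlac : ∃ a : ℕ → ℂ, Function.Injective a ∧ Set.range a = A \ {0} ∧
      Tendsto (fun n => ‖a (n + 1) / a n‖) atTop atTop) :
    ∀ k : ℕ, 1 ≤ k → ∃ n : ℕ, ∀ r : ℂ, (k = 2 → r ≠ 0) →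
      (ESSsolSet A k {0} r).Finite ∧ (ESSsolSet A k {0} r).ncard ≤ n := by
  obtain ⟨a, -, hA, hratio⟩ := hlac
  have ha0 : ∀ n, a n ≠ 0 := fun n => (hA.subset ⟨n, rfl⟩).2
  have ha : EventuallyDominatesPredecessors a :=
    eventuallyDominatesPredecessors_of_tendsto_norm_div ha0 (by simpa only [norm_div] using hratio)
  intro k hk
  obtain ⟨n, hn⟩ := exists_encard_nonvanishingSubsumTuples_le ha k
  refine ⟨max (max n 1) (ESSsolSet A k {0} 0).ncard, fun r hr => ?_⟩
  rw [← Set.encard_le_coe_iff_finite_ncard_le]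
  obtain rfl | hk2 := hk.eq_or_lt
  · exact (encard_ESSsolSet_one_le _).trans (mod_cast le_max_of_le_left (le_max_right n 1))
  obtain rfl | hr0 := eq_or_ne r 0
  · rw [← (ESSsolSet_zero_finite hA ha (by grind)).cast_ncard_eq]
    exact mod_cast le_max_right _ _
  · exact (Set.encard_le_encard (ESSsolSet_subset_nonvanishingSubsumTuples hA hk2 hr0)).trans
      ((hn r).trans (mod_cast le_max_of_le_left (le_max_left n 1)))
end

section
/- Let (G,+) be an abelian group and suppose A ⊆ G has the ESS property in G. Then for any finite set F ⊆ G and any B ⊆ A + F, the set B has the ESS property in G. -/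
open Finset Pointwise

/-- `A` has the ESS property in the abelian group `G`: for every `k ≥ 1` there are
`n_k ∈ ℕ` and finite `U_k, V_k ⊆ G` such that for every `r ∉ U_k` there are at most `n_k`
tuples in `(±A)^k` summing to `r` with no proper nonempty subsum in `V_k`. -/
def HasESSProperty {G : Type*} [AddCommGroup G] (A : Set G) : Prop :=
  ∀ k : ℕ, 1 ≤ k → ∃ (n : ℕ) (U V : Finset G), ∀ r : G, r ∉ U →
    (ESSsolSet A k (V : Set G) r).Finite ∧ (ESSsolSet A k (V : Set G) r).ncard ≤ n

private lemma ncard_biUnion_le_aux {α β : Type*} (s : Finset α) (f : α → Set β) (n : ℕ)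
    (h : ∀ a ∈ s, (f a).ncard ≤ n) : (⋃ a ∈ (s : Set α), f a).ncard ≤ s.card * n := by
  classical
  induction s using Finset.induction_on with
  | empty => simp
  | @insert a s ha ih =>
    have : (⋃ x ∈ ((insert a s : Finset α) : Set α), f x) = f a ∪ ⋃ x ∈ (s : Set α), f x := by
      simp [Set.biUnion_insert]
    rw [this, Finset.card_insert_of_notMem ha]
    calc (f a ∪ ⋃ x ∈ (s : Set α), f x).ncard
        ≤ (f a).ncard + (⋃ x ∈ (s : Set α), f x).ncard := Set.ncard_union_le _ _
      _ ≤ n + s.card * n := by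
          gcongr
          · exact h a (Finset.mem_insert_self a s)
          · exact ih fun x hx => h x (Finset.mem_insert_of_mem hx)
      _ = (s.card + 1) * n := by ring

/-- from Remark 6.10: if `A ⊆ G` has the ESS property in `G` and `F ⊆ G` is
finite, then any `B ⊆ A + F` has the ESS property in `G`. -/
theorem ESS_property_translates {G : Type*} [AddCommGroup G] (A : Set G)
    (hA : HasESSProperty A) (F : Set G) (hF : F.Finite) (B : Set G) (hB : B ⊆ A + F) :
    HasESSProperty B := by
  classical
  intro k hk
  obtain ⟨n, U, V, hUV⟩ := hA k hk
  have hFs : (F ∪ -F).Finite := hF.union hF.neg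
  set T : Finset G := insert (0 : G) hFs.toFinset with hTdef
  -- `S` : all sums of `k` elements of `T`
  set S : Finset G := Finset.image (fun f : Fin k → (T : Finset G) => ∑ i, (f i : G))
    Finset.univ with hSdef
  -- any partial sum of a `T`-valued tuple lies in `S`
  have hS : ∀ g : Fin k → G, (∀ i, g i ∈ T) → ∀ I : Finset (Fin k), (∑ i ∈ I, g i) ∈ S := by
    intro g hg I
    have h0 : ∀ i, (if i ∈ I then g i else 0) ∈ T := by
      intro i
      by_cases hi : i ∈ I
      · simpa [hi] using hg i
      · simp [hi, hTdef]
    rw [hSdef]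
    refine Finset.mem_image.2 ⟨fun i => ⟨if i ∈ I then g i else 0, h0 i⟩, Finset.mem_univ _, ?_⟩
    simp [Finset.sum_ite_mem, Finset.univ_inter]
  -- the finite set of `T`-valued tuples
  have hFT : {f : Fin k → G | ∀ i, f i ∈ (T : Set G)}.Finite := by
    have : {f : Fin k → G | ∀ i, f i ∈ (T : Set G)} =
        Set.pi Set.univ (fun _ : Fin k => (T : Set G)) := by
      ext f; simp [Set.mem_pi]
    rw [this]
    exact Set.Finite.pi fun _ => T.finite_toSet
  -- decomposition of elements of `±B`
  have hdec : ∀ g ∈ B ∪ -B, ∃ a f, (a ∈ A ∪ -A) ∧ (f ∈ F ∪ -F) ∧ g = a + f := by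
    intro g hg
    rcases hg with hg | hg
    · obtain ⟨a, ha, f, hf, hsum⟩ := hB hg
      exact ⟨a, f, Or.inl ha, Or.inl hf, hsum.symm⟩
    · obtain ⟨a, ha, f, hf, hsum⟩ := hB (Set.mem_neg.1 hg)
      refine ⟨-a, -f, Or.inr (by simpa using ha), Or.inr (by simpa using hf), ?_⟩
      have hsum' : a + f = -g := hsum
      have : g = -(a + f) := by rw [hsum']; simp
      rw [this]; abel
  choose! α β hα hβ hαβ using hdec
  refine ⟨n * hFT.toFinset.card, U + S, V + S, ?_⟩
  intro r hr
  -- key facts about an arbitrary solution `t`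
  have key : ∀ t ∈ ESSsolSet B k ((V + S : Finset G) : Set G) r,
      (∀ i, β (t i) ∈ T) ∧
      (β ∘ t) ∈ hFT.toFinset ∧
      (α ∘ t) ∈ ESSsolSet A k (V : Set G) (r - ∑ i, β (t i)) ∧
      t = (α ∘ t) + (β ∘ t) := by
    intro t ⟨ht1, ht2, ht3⟩
    have hβT : ∀ i, β (t i) ∈ T := by
      intro i
      have := hβ (t i) (ht1 i)
      simp only [hTdef, Finset.mem_insert, Set.Finite.mem_toFinset]
      exact Or.inr this
    have hteq : ∀ i, t i = α (t i) + β (t i) := fun i => hαβ (t i) (ht1 i)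
    have hαsum : ∀ I : Finset (Fin k), (∑ i ∈ I, α (t i)) = (∑ i ∈ I, t i) - ∑ i ∈ I, β (t i) := by
      intro I
      have : ∑ i ∈ I, t i = ∑ i ∈ I, (α (t i) + β (t i)) :=
        Finset.sum_congr rfl fun i _ => hteq i
      rw [this, Finset.sum_add_distrib]; abel
    refine ⟨hβT, ?_, ⟨?_, ?_, ?_⟩, ?_⟩
    · simp only [Set.Finite.mem_toFinset, Set.mem_setOf_eq]
      exact fun i => hβT i
    · exact fun i => hα (t i) (ht1 i)
    · have := hαsum Finset.univ
      simpa [ht2] using this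
    · intro I hI1 hI2 hmem
      refine ht3 I hI1 hI2 ?_
      have hsplit : (∑ i ∈ I, t i) = (∑ i ∈ I, α (t i)) + ∑ i ∈ I, β (t i) := by
        rw [hαsum I]; abel
      rw [hsplit]
      exact Finset.add_mem_add hmem (hS (fun i => β (t i)) hβT I)
    · funext i; exact hteq i
  -- solutions embed in a finite union
  set W : Set (Fin k → G) :=
    ⋃ f ∈ (hFT.toFinset : Set (Fin k → G)),
      (fun a => a + f) '' ESSsolSet A k (V : Set G) (r - ∑ i, f i) with hWdef
  have hgood : ∀ f : Fin k → G, f ∈ hFT.toFinset → r - (∑ i, f i) ∉ U := by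
    intro f hf hmem
    apply hr
    have hfT : ∀ i, f i ∈ T := by simpa using (Set.Finite.mem_toFinset hFT).1 hf
    have : r = (r - ∑ i, f i) + ∑ i, f i := by abel
    rw [this]
    exact Finset.add_mem_add hmem (by simpa using hS f hfT Finset.univ)
  have hsub : ESSsolSet B k ((V + S : Finset G) : Set G) r ⊆ W := by
    intro t ht
    obtain ⟨hβT, hfm, hαm, hteq⟩ := key t ht
    refine Set.mem_biUnion (by exact_mod_cast hfm) ?_
    exact ⟨α ∘ t, by simpa using hαm, hteq.symm⟩
  have hWfin : W.Finite := by
    refine Set.Finite.biUnion (by simpa using hFT.toFinset.finite_toSet) ?_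
    intro f hf
    exact ((hUV _ (hgood f (by exact_mod_cast hf))).1).image _
  refine ⟨hWfin.subset hsub, ?_⟩
  calc (ESSsolSet B k ((V + S : Finset G) : Set G) r).ncard
      ≤ W.ncard := Set.ncard_le_ncard hsub hWfin
    _ ≤ hFT.toFinset.card * n := by
        refine ncard_biUnion_le_aux _ _ n ?_
        intro f hf
        have hgf := hgood f hf
        calc ((fun a => a + f) '' ESSsolSet A k (V : Set G) (r - ∑ i, f i)).ncard
            ≤ (ESSsolSet A k (V : Set G) (r - ∑ i, f i)).ncard :=
              Set.ncard_image_le (hUV _ hgf).1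
          _ ≤ n := (hUV _ hgf).2
    _ = n * hFT.toFinset.card := Nat.mul_comm _ _
end

section
/- For any A ⊆ ℤ, the following are equivalent: (i) for every n ≥ 1 there is no finite set F ⊆ ℤ with ℤ = Σ_n(±A) + F (i.e., A is sufficiently sparse in (ℤ,+)); (ii) for all m, n ≥ 1, mℤ is not a subset of Σ_n(±A). -/
open Finset Pointwise

/-- `Σ_n(±A) = {a₁ + ⋯ + a_k : 1 ≤ k ≤ n, a₁,…,a_k ∈ ±A}`. -/
def SigmaPM {G : Type*} [AddCommGroup G] (A : Set G) (n : ℕ) : Set G :=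
  {x | ∃ k : ℕ, 1 ≤ k ∧ k ≤ n ∧ ∃ t : Fin k → G, (∀ i, t i ∈ A ∪ -A) ∧ (∑ i, t i) = x}

lemma SigmaPM.mono {G : Type*} [AddCommGroup G] (A : Set G) {n n' : ℕ} (h : n ≤ n') :
    SigmaPM A n ⊆ SigmaPM A n' := by
  rintro x ⟨k, hk1, hkn, t, ht, hs⟩
  exact ⟨k, hk1, hkn.trans h, t, ht, hs⟩

lemma SigmaPM.add_mem {G : Type*} [AddCommGroup G] {A : Set G} {n m : ℕ} {x y : G}
    (hx : x ∈ SigmaPM A n) (hy : y ∈ SigmaPM A m) : x + y ∈ SigmaPM A (n + m) := by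
  obtain ⟨k, hk1, hkn, t, ht, hs⟩ := hx
  obtain ⟨l, hl1, hlm, u, hu, hsu⟩ := hy
  refine ⟨k + l, le_trans hk1 (Nat.le_add_right _ _), Nat.add_le_add hkn hlm,
    Fin.append t u, ?_, ?_⟩
  · intro i
    refine Fin.addCases (fun j => ?_) (fun j => ?_) i
    · rw [Fin.append_left]; exact ht j
    · rw [Fin.append_right]; exact hu j
  · rw [Fin.sum_univ_add]
    simp only [Fin.append_left, Fin.append_right, hs, hsu]

lemma SigmaPM.neg_mem {G : Type*} [AddCommGroup G] {A : Set G} {n : ℕ} {x : G}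
    (hx : x ∈ SigmaPM A n) : -x ∈ SigmaPM A n := by
  obtain ⟨k, hk1, hkn, t, ht, hs⟩ := hx
  refine ⟨k, hk1, hkn, fun i => -t i, fun i => ?_, by simp [← hs]⟩
  rcases ht i with h | h
  · right; simpa using h
  · left; simpa using h

lemma SigmaPM.nsmul_mem {G : Type*} [AddCommGroup G] {A : Set G} {n : ℕ} {x : G}
    (hx : x ∈ SigmaPM A n) : ∀ k : ℕ, 1 ≤ k → k • x ∈ SigmaPM A (k * n) := by
  intro k hk
  induction k with
  | zero => omega
  | succ k ih =>
    rcases Nat.eq_or_lt_of_le hk with h | h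
    · obtain rfl : k = 0 := by omega
      simpa using hx
    · have := SigmaPM.add_mem (ih (by omega)) hx
      rw [succ_nsmul]
      have hn : k * n + n = (k + 1) * n := by ring
      rw [← hn]
      exact this

/-- from Remark 5.8: for `A ⊆ ℤ`, the set `A` is sufficiently sparse in
`(ℤ,+)` (no `Σ_n(±A)` is generic) if and only if `mℤ ⊄ Σ_n(±A)` for all `m, n ≥ 1`. -/
theorem sufficiently_sparse_iff_no_mZ (A : Set ℤ) :
    (∀ n : ℕ, 1 ≤ n → ¬ ∃ F : Set ℤ, F.Finite ∧ SigmaPM A n + F = Set.univ) ↔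
    (∀ m n : ℕ, 1 ≤ m → 1 ≤ n →
      ¬ (Set.range (fun z : ℤ => (m : ℤ) * z) ⊆ SigmaPM A n)) := by
  constructor
  · -- sparse → no mℤ
    intro h m n hm hn hsub
    refine h n hn ⟨Set.Ico 0 (m : ℤ), Set.finite_Ico _ _, ?_⟩
    apply Set.eq_univ_of_forall
    intro z
    refine ⟨(m : ℤ) * (z / m), hsub ⟨z / m, rfl⟩, z % m, ?_, Int.mul_ediv_add_emod z m⟩
    have hm' : (0 : ℤ) < (m : ℤ) := by exact_mod_cast hm
    exact Set.mem_Ico.2 ⟨Int.emod_nonneg z hm'.ne', Int.emod_lt_of_pos z hm'⟩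
  · -- no mℤ → sparse
    intro h n hn ⟨F, hF, hFu⟩
    -- for each k, choose s_k ∈ Σ_n and f_k ∈ F with s_k + f_k = k * d, then pigeonhole
    set N := hF.toFinset.card with hN
    set m := Nat.factorial N with hm
    have hm1 : 1 ≤ m := Nat.factorial_pos N
    refine h m (2 * n * m) hm1 (by nlinarith) ?_
    rintro _ ⟨d, rfl⟩
    -- choose decompositions
    have hchoice : ∀ k : ℕ, ∃ s f : ℤ, s ∈ SigmaPM A n ∧ f ∈ F ∧ s + f = (k : ℤ) * d := by
      intro k
      have : ((k : ℤ) * d) ∈ SigmaPM A n + F := by rw [hFu]; trivial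
      obtain ⟨s, hs, f, hf, hsf⟩ := this
      exact ⟨s, f, hs, hf, hsf⟩
    choose s f hs hfF hsf using hchoice
    -- pigeonhole on k ∈ Icc 1 (N+1)
    have hcard : hF.toFinset.card < (Finset.Icc 1 (N + 1)).card := by
      rw [Nat.card_Icc]; omega
    obtain ⟨a, ha, b, hb, hab, hfab⟩ :=
      Finset.exists_ne_map_eq_of_card_lt_of_maps_to hcard
        (fun k _ => hF.mem_toFinset.2 (hfF k))
    -- wlog a > b
    wlog hba : b < a generalizing a b
    · exact this b hb a ha hab.symm hfab.symm (by omega)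
    -- (a - b) * d ∈ Σ_{2n}
    have hdiff : ((a - b : ℕ) : ℤ) * d ∈ SigmaPM A (2 * n) := by
      have h1 : s a - s b = ((a - b : ℕ) : ℤ) * d := by
        have e1 := hsf a
        have e2 := hsf b
        have : (a:ℤ) - (b:ℤ) = ((a - b : ℕ) : ℤ) := by
          rw [Nat.cast_sub (le_of_lt hba)]
        rw [← this]
        rw [hfab] at e1
        linarith [e1, e2, sub_mul (a:ℤ) (b:ℤ) d]
      rw [← h1]
      have := SigmaPM.add_mem (hs a) (SigmaPM.neg_mem (hs b))
      rw [sub_eq_add_neg]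
      have h2 : n + n = 2 * n := by ring
      rwa [h2] at this
    -- multiply up to m
    set j := a - b with hj
    have hj1 : 1 ≤ j := by omega
    have hjN : j ≤ N := by
      have ha' := Finset.mem_Icc.1 ha
      have hb' := Finset.mem_Icc.1 hb
      omega
    have hjdvd : j ∣ m := Nat.dvd_factorial hj1 hjN
    obtain ⟨c, hc⟩ := hjdvd
    have hc1 : 1 ≤ c := by
      rcases Nat.eq_zero_or_pos c with rfl | h0
      · simp at hc; omega
      · exact h0
    have := SigmaPM.nsmul_mem hdiff c hc1
    have key : (c : ℤ) * (((j : ℕ) : ℤ) * d) ∈ SigmaPM A (c * (2 * n)) := by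
      simpa [nsmul_eq_mul] using this
    have heq : (m : ℤ) * d = (c : ℤ) * (((j : ℕ) : ℤ) * d) := by
      have : (m : ℤ) = (c : ℤ) * (j : ℤ) := by exact_mod_cast (by rw [hc]; ring : m = c * j)
      rw [this]; ring
    show (m : ℤ) * d ∈ SigmaPM A (2 * n * m)
    rw [heq]
    refine SigmaPM.mono A ?_ key
    calc c * (2 * n) = 2 * n * (1 * c) := by ring
      _ ≤ 2 * n * (j * c) := Nat.mul_le_mul_left _ (Nat.mul_le_mul_right _ hj1)
      _ = 2 * n * m := by rw [hc]
end

section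
/- Let A be an infinite set, (G,+) an abelian group, and Φ a set of functions from A to G such that A has the ESS property with respect to Φ and G. Then for every k ≥ 1 there exist m, N ∈ ℕ such that the following holds for every φ̄ = (φ_1,…,φ_k) ∈ Φ^k and every r ∈ G. Let R ⊆ A^k be the k-ary relation R = {(a_1,…,a_k) ∈ A^k : φ_1(a_1) + ⋯ + φ_k(a_k) = r}. Then for every ℓ with 1 ≤ ℓ ≤ k, every injection of ℓ variable slots into the k argument positions of R, and every finite set B ⊆ A: at most N equivalence classes of the relation 'same quantifier-free R-type over B' on A^ℓ contain m pairwise disjoint tuples. Here two tuples (a_1,…,a_ℓ), (a'_1,…,a'_ℓ) ∈ A^ℓ have the same quantifier-free R-type over B if (1) a_i = a_j ⇔ a'_i = a'_j for all i, j ≤ ℓ; (2) a_i = b ⇔ a'_i = b for all i ≤ ℓ and b ∈ B; and (3) for every k-tuple w̄ whose entries are either variable indices from {1,…,ℓ} or elements of B, the tuple obtained from w̄ by substituting a_i for index i lies in R if and only if the tuple obtained by substituting a'_i for index i lies in R. Two tuples in A^ℓ are disjoint if they have no coordinate value in common. -/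
open Finset

/-- `A_V(φ̄;r)`: tuples `ā ∈ A^k` with `φ₁(a₁) + ⋯ + φ_k(a_k) = r` and no proper nonempty
subsum `Σ_{i∈I} φᵢ(aᵢ)` lying in `V`. -/
def ESSsolSetPhi {A G : Type*} [AddCommGroup G] {k : ℕ} (φ : Fin k → A → G) (V : Set G)
    (r : G) : Set (Fin k → A) :=
  {a | (∑ i, φ i (a i)) = r ∧
    ∀ I : Finset (Fin k), I.Nonempty → I ≠ Finset.univ → (∑ i ∈ I, φ i (a i)) ∉ V}

/-- `A` has the ESS property with respect to `Φ` and `G`: for every `k ≥ 1` there are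
`n_k ∈ ℕ` and finite `U_k, V_k ⊆ G` with `|A_{V_k}(φ̄;r)| ≤ n_k` for all `φ̄ ∈ Φ^k` and
all `r ∉ U_k`. -/
def HasESSPropertyPhi {A G : Type*} [AddCommGroup G] (Φ : Set (A → G)) : Prop :=
  ∀ k : ℕ, 1 ≤ k → ∃ (n : ℕ) (U V : Finset G),
    ∀ φ : Fin k → A → G, (∀ i, φ i ∈ Φ) → ∀ r : G, r ∉ U →
      (ESSsolSetPhi φ (V : Set G) r).Finite ∧ (ESSsolSetPhi φ (V : Set G) r).ncard ≤ n

/-- Substitution of an `ℓ`-tuple `a` into a `k`-tuple `w` of "variable indices or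
constants". -/
def substTuple {A : Type*} {k ℓ : ℕ} (a : Fin ℓ → A) (w : Fin k → Fin ℓ ⊕ A) :
    Fin k → A :=
  fun p => Sum.elim a id (w p)

/-- Two `ℓ`-tuples have the same quantifier-free `R`-type over `B`: they satisfy the same
equalities among coordinates, the same equalities with constants from `B`, and the same
instances of `R` with entries that are variables or constants from `B`. -/
def SameQfType {A : Type*} {k ℓ : ℕ} (R : Set (Fin k → A)) (B : Finset A)
    (a a' : Fin ℓ → A) : Prop :=
  (∀ i j : Fin ℓ, a i = a j ↔ a' i = a' j) ∧
  (∀ (i : Fin ℓ) (b : A), b ∈ B → (a i = b ↔ a' i = b)) ∧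
  (∀ w : Fin k → Fin ℓ ⊕ A, (∀ (p : Fin k) (b : A), w p = Sum.inr b → b ∈ B) →
    (substTuple a w ∈ R ↔ substTuple a' w ∈ R))

/-- Two tuples are disjoint if they share no coordinate value. -/
def DisjointTuples {A : Type*} {ℓ : ℕ} (a a' : Fin ℓ → A) : Prop :=
  ∀ p q : Fin ℓ, a p ≠ a' q

/-- The qf `R`-type over `B` of the tuple `a` supports an `m`-array: its class contains
`m` pairwise disjoint tuples. -/
def SupportsArray {A : Type*} {k ℓ : ℕ} (R : Set (Fin k → A)) (B : Finset A) (m : ℕ)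
    (a : Fin ℓ → A) : Prop :=
  ∃ c : Fin m → Fin ℓ → A, (∀ s, SameQfType R B (c s) a) ∧
    ∀ s t : Fin m, s ≠ t → DisjointTuples (c s) (c t)

/-!
By induction on the length `j ≤ k`, the ESS property yields a finite `D ⊆ G` containing every
common `ψ`-sum `g` of `m` pairwise disjoint `j`-tuples, for `m` large enough: if `g ∉ U_j`, at
most `n_j` of the tuples lie in `A_{V_j}(ψ̄; g)`, so by pigeonhole `m₀` of them share a proper
subsum `Σ_{i ∈ I} ψᵢ = v ∈ V_j`; their restrictions to `Iᶜ` exhibit `g - v` as such a sum of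
smaller length, whence `g ∈ V_j + D`.

A tuple whose type over `B` supports an array avoids `B`, and for each instance of `R` it
satisfies, the part of the sum coming from variable positions is shared by the disjoint tuples
of the array, hence lies in `D`. So the type is determined by the equality pattern of the tuple
and by its finitely many partial sums, remembered only when they lie in `D`.
-/

open Function
open scoped Pointwise

section Arrays

variable {ι A G : Type*} [AddCommGroup G]

def IsArraySum [Fintype ι] (ψ : ι → A → G) (m : ℕ) (g : G) : Prop :=
  ∃ x : Fin m → ι → A, Pairwise (Disjoint on fun s => Set.range (x s)) ∧
    ∀ s, ∑ i, ψ i (x s i) = g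

variable [Fintype ι] {ψ : ι → A → G} {m : ℕ} {g : G}

lemma IsArraySum.of_le_card {κ : Type*} [LinearOrder κ] {T : Finset κ} {x : κ → ι → A}
    (hx : (T : Set κ).PairwiseDisjoint fun s => Set.range (x s)) (hm : m ≤ #T)
    (hsum : ∀ s ∈ T, ∑ i, ψ i (x s i) = g) : IsArraySum ψ m g := by
  set e := T.orderEmbOfCardLe hm
  refine ⟨fun s => x (e s), fun s t hst => ?_, fun s => hsum _ (T.orderEmbOfCardLe_mem hm s)⟩
  exact hx (T.orderEmbOfCardLe_mem hm s) (T.orderEmbOfCardLe_mem hm t) (e.injective.ne hst)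

lemma IsArraySum.mono {m' : ℕ} (h : IsArraySum ψ m g) (hm : m' ≤ m) : IsArraySum ψ m' g := by
  obtain ⟨x, hx, hsum⟩ := h
  exact .of_le_card (T := univ) (hx.set_pairwise _) (by simpa using hm) fun s _ => hsum s

lemma IsArraySum.comp_equiv {ι' : Type*} [Fintype ι'] (h : IsArraySum ψ m g) (e : ι' ≃ ι) :
    IsArraySum (ψ ∘ e) m g := by
  obtain ⟨x, hx, hsum⟩ := h
  refine ⟨fun s => x s ∘ e, fun s t hst => ?_, fun s => ?_⟩
  · simpa only [onFun, EquivLike.range_comp] using hx hst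
  · simpa only [comp_apply] using (e.sum_comp fun i => ψ i (x s i)).trans (hsum s)

end Arrays

section ESS

variable {A G : Type*} [AddCommGroup G]

def ArraySumsSubset (Φ : Set (A → G)) (k m : ℕ) (D : Finset G) : Prop :=
  ∀ (ι : Type) [Fintype ι] [Nonempty ι], Fintype.card ι ≤ k →
    ∀ ψ : ι → A → G, (∀ i, ψ i ∈ Φ) → ∀ g, IsArraySum ψ m g → g ∈ D

lemma ArraySumsSubset.mono {Φ : Set (A → G)} {k m m' : ℕ} {D : Finset G}
    (hD : ArraySumsSubset Φ k m D) (hm : m ≤ m') : ArraySumsSubset Φ k m' D :=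
  fun ι _ _ hι ψ hψ g hg => hD ι hι ψ hψ g (hg.mono hm)

lemma mem_add_of_isArraySum [DecidableEq G] {j n m : ℕ} [NeZero j] {V D : Finset G}
    {ψ : Fin j → A → G} {g : G}
    (hfin : (ESSsolSetPhi ψ V g).Finite) (hn : (ESSsolSetPhi ψ V g).ncard ≤ n)
    (hD : ∀ I : Finset (Fin j), I.Nonempty → I ≠ univ →
      ∀ g', IsArraySum (fun i : ↥Iᶜ => ψ i) m g' → g' ∈ D)
    (h : IsArraySum ψ (n + 2 ^ j * #V * m + 1) g) : g ∈ V + D := by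
  classical
  obtain ⟨x, hx, hsum⟩ := h
  have hx_inj : Injective x := pairwise_ne_iff_injective.1 <|
    hx.mono fun _ _ hst hxst => Set.disjoint_range_iff.1 hst 0 0 (congrFun hxst 0)
  have hgood : #{s | x s ∈ ESSsolSetPhi ψ V g} ≤ n := by
    rw [← Set.ncard_coe_finset]
    refine le_trans (Set.ncard_le_ncard_of_injOn x (fun s hs => ?_) hx_inj.injOn hfin) hn
    simpa using hs
  set P := ({I | I.Nonempty ∧ I ≠ univ} : Finset (Finset (Fin j))) ×ˢ V
  have hbad : ∀ s ∈ ({s | x s ∉ ESSsolSetPhi ψ V g} : Finset _),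
      ∃ q ∈ P, ∑ i ∈ q.1, ψ i (x s i) = q.2 := by
    intro s hs
    replace hs : x s ∉ ESSsolSetPhi ψ V g := (mem_filter.1 hs).2
    simp only [ESSsolSetPhi, Set.mem_ofPred_eq, hsum s, true_and, not_forall, not_not] at hs
    obtain ⟨I, hI, hIuniv, hIV⟩ := hs
    exact ⟨(I, _), mem_product.2 ⟨by simp [hI, hIuniv], hIV⟩, rfl⟩
  choose! f hfP hfsum using hbad
  have hP : #P ≤ 2 ^ j * #V := by
    rw [card_product]
    gcongr
    simpa using card_filter_le (univ : Finset (Finset (Fin j))) _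
  have hcard : #P * m < #({s | x s ∉ ESSsolSetPhi ψ V g} : Finset (Fin _)) := by
    have := card_filter_add_card_filter_not (s := univ) (fun s => x s ∈ ESSsolSetPhi ψ V g)
    simp only [card_univ, Fintype.card_fin] at this
    nlinarith
  obtain ⟨⟨I, v⟩, hIv, hfiber⟩ := exists_lt_card_fiber_of_mul_lt_card_of_maps_to hfP hcard
  simp only [P, mem_product, mem_filter, mem_univ, true_and] at hIv
  obtain ⟨⟨hI, hIuniv⟩, hv⟩ := hIv
  suffices IsArraySum (fun i : ↥Iᶜ => ψ i) m (g - v) by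
    simpa using add_mem_add hv (hD I hI hIuniv _ this)
  refine .of_le_card (x := fun s (i : ↥Iᶜ) => x s i)
    (fun s _ t _ hst => (hx hst).mono (Set.range_comp_subset_range _ _)
      (Set.range_comp_subset_range _ _)) hfiber.le fun s hs => ?_
  simp only [mem_filter, mem_univ, true_and] at hs
  have hIsum : ∑ i ∈ I, ψ i (x s i) = v := by simpa [hs.2] using hfsum s (by simpa using hs.1)
  rw [sum_coe_sort Iᶜ fun i => ψ i (x s i), eq_sub_iff_add_eq', ← hsum s, ← sum_add_sum_compl I,
    hIsum]

theorem HasESSPropertyPhi.exists_arraySumsSubset {Φ : Set (A → G)} (hΦ : HasESSPropertyPhi Φ)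
    (k : ℕ) :
    ∃ m D, ArraySumsSubset Φ k m D := by
  classical
  induction k with
  | zero => exact ⟨0, ∅, fun ι _ _ hι => absurd hι Fintype.card_pos.not_ge⟩
  | succ k ih =>
    obtain ⟨m, D, hD⟩ := ih
    obtain ⟨n, U, V, hU⟩ := hΦ (k + 1) k.succ_pos
    refine ⟨m + (n + 2 ^ (k + 1) * #V * m + 1), D ∪ U ∪ (V + D), ?_⟩
    intro ι _ _ hι ψ hψ g hg
    rcases hι.lt_or_eq with hlt | hcard
    · exact mem_union_left _ <| mem_union_left _ <|
        (hD.mono (Nat.le_add_right _ _)) ι (Nat.le_of_lt_succ hlt) ψ hψ g hg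
    by_cases hgU : g ∈ U
    · exact mem_union_left _ (mem_union_right _ hgU)
    obtain ⟨hfin, hn⟩ := hU (ψ ∘ (Fintype.equivFinOfCardEq hcard).symm) (fun i => hψ _) g hgU
    refine mem_union_right _ (mem_add_of_isArraySum hfin hn (fun I hI hIuniv g' hg' => ?_)
      ((hg.comp_equiv _).mono (Nat.le_add_left _ _)))
    have : Nonempty ↥Iᶜ := by simpa [eq_univ_iff_forall] using hIuniv
    refine hD _ ?_ _ (fun i => hψ _) g' hg'
    rw [Fintype.card_coe, card_compl, Fintype.card_fin]
    have := hI.card_pos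
    omega

end ESS

lemma SupportsArray.apply_notMem {A : Type*} {k ℓ m : ℕ} {R : Set (Fin k → A)} {B : Finset A}
    {a : Fin ℓ → A} (ha : SupportsArray R B m a) (hm : 2 ≤ m) (i : Fin ℓ) : a i ∉ B := by
  obtain ⟨c, hc, hdisj⟩ := ha
  intro hi
  have hci : ∀ s, c s i = a i := fun s => ((hc s).2.1 i _ hi).2 rfl
  exact hdisj ⟨0, by omega⟩ ⟨1, by omega⟩ (by simp [Fin.ext_iff]) i i ((hci _).trans (hci _).symm)

section QfTypes

variable {A G : Type*} [AddCommGroup G] {k ℓ : ℕ} (φ : Fin k → A → G)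

def partialSum (a : Fin ℓ → A) (q : Finset (Fin k) × (Fin k → Fin ℓ)) : G :=
  ∑ p ∈ q.1, φ p (a (q.2 p))

-- `i₀` is a dummy index at the positions carrying constants, which lie outside the first component.
def varPattern (i₀ : Fin ℓ) (w : Fin k → Fin ℓ ⊕ A) : Finset (Fin k) × (Fin k → Fin ℓ) :=
  (({p | (w p).isLeft} : Finset (Fin k)), fun p => Sum.elim id (fun _ => i₀) (w p))

def constSum (w : Fin k → Fin ℓ ⊕ A) : G :=
  ∑ p, Sum.elim (fun _ => 0) (φ p) (w p)

lemma sum_substTuple (i₀ : Fin ℓ) (a : Fin ℓ → A) (w : Fin k → Fin ℓ ⊕ A) :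
    ∑ p, φ p (substTuple a w p) = partialSum φ a (varPattern i₀ w) + constSum φ w := by
  simp only [substTuple, partialSum, varPattern, constSum, sum_filter, ← sum_add_distrib]
  refine sum_congr rfl fun p _ => ?_
  rcases w p with i | b <;> simp

variable {Φ : Set (A → G)} {m : ℕ} {D : Finset G} {r : G} {B : Finset A}

lemma partialSum_varPattern_mem (hD : ArraySumsSubset Φ k m D) (hφ : ∀ i, φ i ∈ Φ)
    {a : Fin ℓ → A} (ha : SupportsArray {x | ∑ i, φ i (x i) = r} B m a)
    {w : Fin k → Fin ℓ ⊕ A} (hwB : ∀ p b, w p = Sum.inr b → b ∈ B)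
    (hw : substTuple a w ∈ {x | ∑ i, φ i (x i) = r}) (i₀ : Fin ℓ)
    (hS : (varPattern i₀ w).1.Nonempty) : partialSum φ a (varPattern i₀ w) ∈ D := by
  obtain ⟨c, hc, hdisj⟩ := ha
  set q := varPattern i₀ w
  have : Nonempty ↥q.1 := hS.coe_sort
  refine hD q.1 (by simpa using card_le_univ q.1) (fun p => φ p) (fun p => hφ p) _
    ⟨fun s p => c s (q.2 p), fun s t hst => ?_, fun s => ?_⟩
  · exact (Set.disjoint_range_iff.2 (hdisj s t hst)).mono (Set.range_comp_subset_range _ _)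
      (Set.range_comp_subset_range _ _)
  · have hcw : substTuple (c s) w ∈ {x | ∑ i, φ i (x i) = r} := ((hc s).2.2 w hwB).2 hw
    simp only [Set.mem_ofPred_eq, sum_substTuple φ i₀] at hw hcw
    rw [sum_coe_sort q.1 fun p => φ p (c s (q.2 p))]
    exact add_right_cancel (hcw.trans hw.symm)

abbrev QfCode (k ℓ : ℕ) (D : Finset G) :=
  (Fin ℓ → Fin ℓ → Prop) × (Finset (Fin k) × (Fin k → Fin ℓ) → Option D)

noncomputable def qfCode (D : Finset G) (a : Fin ℓ → A) : QfCode k ℓ D :=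
  (fun i j => a i = a j, fun q => partialInv Subtype.val (partialSum φ a q))

lemma substTuple_mem_of_qfCode_eq (hD : ArraySumsSubset Φ k m D) (hφ : ∀ i, φ i ∈ Φ)
    {a a' : Fin ℓ → A} (ha : SupportsArray {x | ∑ i, φ i (x i) = r} B m a)
    (hcode : qfCode φ D a = qfCode φ D a') (i₀ : Fin ℓ) {w : Fin k → Fin ℓ ⊕ A}
    (hwB : ∀ p b, w p = Sum.inr b → b ∈ B) (hw : substTuple a w ∈ {x | ∑ i, φ i (x i) = r}) :
    substTuple a' w ∈ {x | ∑ i, φ i (x i) = r} := by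
  have hq : partialSum φ a' (varPattern i₀ w) = partialSum φ a (varPattern i₀ w) := by
    rcases (varPattern i₀ w).1.eq_empty_or_nonempty with hS | hS
    · simp [partialSum, hS]
    have hinv := (Subtype.val_injective (p := (· ∈ D))).isPartialInv
    have hmem := partialSum_varPattern_mem φ hD hφ ha hwB hw i₀ hS
    refine ((hinv ⟨_, hmem⟩ _).1 ?_).symm
    exact (congrFun (congrArg Prod.snd hcode) _).symm.trans ((hinv ⟨_, hmem⟩ _).2 rfl)
  simp only [Set.mem_ofPred_eq, sum_substTuple φ i₀, hq] at hw ⊢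
  exact hw

lemma sameQfType_of_qfCode_eq (hD : ArraySumsSubset Φ k m D) (hφ : ∀ i, φ i ∈ Φ) (hm : 2 ≤ m)
    (i₀ : Fin ℓ) {a a' : Fin ℓ → A} (ha : SupportsArray {x | ∑ i, φ i (x i) = r} B m a)
    (ha' : SupportsArray {x | ∑ i, φ i (x i) = r} B m a') (hcode : qfCode φ D a = qfCode φ D a') :
    SameQfType {x | ∑ i, φ i (x i) = r} B a a' :=
  ⟨fun i j => (congrFun (congrFun (congrArg Prod.fst hcode) i) j).to_iff,
    fun i _ hb => iff_of_false (fun h => ha.apply_notMem hm i (h ▸ hb))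
      (fun h => ha'.apply_notMem hm i (h ▸ hb)),
    fun _ hwB => ⟨substTuple_mem_of_qfCode_eq φ hD hφ ha hcode i₀ hwB,
      substTuple_mem_of_qfCode_eq φ hD hφ ha' hcode.symm i₀ hwB⟩⟩

end QfTypes

theorem ESS_implies_uniformly_bounded_arrays_general {A G : Type*} [AddCommGroup G]
    (Φ : Set (A → G)) (hΦ : HasESSPropertyPhi Φ) (k : ℕ) :
    ∃ m N : ℕ, ∀ φ : Fin k → A → G, (∀ i, φ i ∈ Φ) → ∀ r : G,
      ∀ ℓ : ℕ, 1 ≤ ℓ → ℓ ≤ k → ∀ ι : Fin ℓ → Fin k, Function.Injective ι →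
      ∀ B : Finset A,
      ¬ ∃ g : Fin (N + 1) → Fin ℓ → A,
        (∀ t, SupportsArray {x : Fin k → A | (∑ i, φ i (x i)) = r} B m (g t)) ∧
        (∀ t t' : Fin (N + 1), t ≠ t' →
          ¬ SameQfType {x : Fin k → A | (∑ i, φ i (x i)) = r} B (g t) (g t')) := by
  obtain ⟨m, D, hD⟩ := hΦ.exists_arraySumsSubset k
  refine ⟨m + 2, (range (k + 1)).sup fun ℓ => Fintype.card (QfCode k ℓ D), ?_⟩
  rintro φ hφ r ℓ hℓ hℓk - - B ⟨g, hg, hne⟩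
  obtain ⟨t, t', htt', hcode⟩ :=
    Fintype.exists_ne_map_eq_of_card_lt (fun t => qfCode φ D (g t)) <| by
      rw [Fintype.card_fin, Nat.lt_succ_iff]
      exact le_sup (f := fun ℓ => Fintype.card (QfCode k ℓ D)) (mem_range.2 (by omega))
  exact hne t t' htt' (sameQfType_of_qfCode_eq φ (hD.mono (Nat.le_add_right _ _)) hφ
    (Nat.le_add_left _ _) ⟨0, hℓ⟩ (hg t) (hg t') hcode)

/-- Proposition 6.7: if the infinite set `A` has the ESS property with
respect to `Φ` and `G`, then each relation `R = A(φ̄;r)` has uniformly bounded arrays: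
for every `k ≥ 1` there are `m, N` such that for every `φ̄ ∈ Φ^k`, `r ∈ G`,
`1 ≤ ℓ ≤ k`, every injection of the `ℓ` variable slots into the `k` argument positions,
and every finite `B ⊆ A`, at most `N` quantifier-free `R`-types over `B` in `ℓ` variables
support an `m`-array (i.e. there do not exist `N + 1` pairwise non-equivalent tuples each
of whose classes contains `m` pairwise disjoint tuples). -/
theorem ESS_implies_uniformly_bounded_arrays {A G : Type*} [Infinite A] [AddCommGroup G]
    (Φ : Set (A → G)) (hΦ : HasESSPropertyPhi Φ) (k : ℕ) (hk : 1 ≤ k) :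
    ∃ m N : ℕ, ∀ φ : Fin k → A → G, (∀ i, φ i ∈ Φ) → ∀ r : G,
      ∀ ℓ : ℕ, 1 ≤ ℓ → ℓ ≤ k → ∀ ι : Fin ℓ → Fin k, Function.Injective ι →
      ∀ B : Finset A,
      ¬ ∃ g : Fin (N + 1) → Fin ℓ → A,
        (∀ t, SupportsArray {x : Fin k → A | (∑ i, φ i (x i)) = r} B m (g t)) ∧
        (∀ t t' : Fin (N + 1), t ≠ t' →
          ¬ SameQfType {x : Fin k → A | (∑ i, φ i (x i)) = r} B (g t) (g t')) :=
  ESS_implies_uniformly_bounded_arrays_general Φ hΦ k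
end
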